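/- Let x, x′ ∈ [0,1) be dyadic rationals and let Ω ∈ ℕ be such that 2^Ω x and 2^Ω x′ are both integers. Then for every real h with 0 < h < 2^{−Ω} and x + h < 1, one has (x + h) ⊕ x′ = (x ⊕ x′) + h. Consequently, at every pair of dyadic rationals x, x′ ∈ [0,1) the right partial derivative of the map (x, x′) ↦ x ⊕ x′ in each argument exists and equals 1: lim_{h → 0⁺} ((x + h) ⊕ x′ − (x ⊕ x′))/h = 1 and lim_{h → 0⁺} (x ⊕ (x′ + h) − (x ⊕ x′))/h = 1. -/

import Mathlib

/-!
A dyadic number with denominator `2 ^ Ω` has no binary digits beyond position `Ω`, while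
`0 ≤ h < 2 ^ (-Ω)` has none up to position `Ω`. Hence `x + h` is formed without carries: its
digits are those of `x` up to position `Ω` and those of `h` afterwards. Since the digits of `x'`
also vanish beyond position `Ω`, XOR with `x'` acts on the two blocks separately and
`(x + h) ⊕ x' = (x ⊕ x') + h`. The difference quotient is therefore identically `1` on
`(0, 2 ^ (-Ω))`, and the derivative in `x'` follows by symmetry of `⊕`.
-/

noncomputable def binDigit (ℓ : ℕ) (x : ℝ) : ℕ := (⌊(2 : ℝ) ^ ℓ * x⌋).toNat % 2

noncomputable def xorBin (x y : ℝ) : ℝ :=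
  ∑' ℓ : ℕ,
    (((binDigit (ℓ + 1) x + binDigit (ℓ + 1) y) % 2 : ℕ) : ℝ) * (2 : ℝ) ^ (-((ℓ : ℤ) + 1))

open Filter Topology

lemma binDigit_eq_natFloor (ℓ : ℕ) (x : ℝ) : binDigit ℓ x = ⌊2 ^ ℓ * x⌋₊ % 2 := by
  rw [binDigit, Int.floor_toNat]

lemma binDigit_lt_two (ℓ : ℕ) (x : ℝ) : binDigit ℓ x < 2 := Nat.mod_lt _ two_pos

lemma binDigit_zero_right (ℓ : ℕ) : binDigit ℓ 0 = 0 := by simp [binDigit]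

lemma binDigit_succ_eq (ℓ : ℕ) (y : ℝ) :
    (binDigit (ℓ + 1) y : ℝ) = ⌊2 ^ (ℓ + 1) * y⌋₊ - 2 * ⌊2 ^ ℓ * y⌋₊ := by
  have hdiv : ⌊2 ^ (ℓ + 1) * y⌋₊ / 2 = ⌊2 ^ ℓ * y⌋₊ := by
    rw [← Nat.floor_div_natCast]
    congr 1
    push_cast
    ring
  rw [binDigit_eq_natFloor, eq_sub_iff_add_eq, ← hdiv]
  exact_mod_cast Nat.mod_add_div _ 2

lemma two_zpow_neg_succ (ℓ : ℕ) : (2 : ℝ) ^ (-((ℓ : ℤ) + 1)) = ((2 : ℝ) ^ (ℓ + 1))⁻¹ := by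
  rw [zpow_neg, ← zpow_natCast]
  push_cast
  rfl

lemma summable_digits {c : ℕ → ℕ} (hc : ∀ ℓ, c ℓ < 2) :
    Summable (fun ℓ : ℕ => (c ℓ : ℝ) * 2 ^ (-((ℓ : ℤ) + 1))) := by
  refine Summable.of_nonneg_of_le (fun ℓ => by positivity) (fun ℓ => ?_) summable_geometric_two
  have hc1 : (c ℓ : ℝ) ≤ 1 := by exact_mod_cast Nat.le_of_lt_succ (hc ℓ)
  calc (c ℓ : ℝ) * 2 ^ (-((ℓ : ℤ) + 1)) ≤ 1 * ((2 : ℝ) ^ (ℓ + 1))⁻¹ := by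
        rw [two_zpow_neg_succ]; gcongr
    _ ≤ (1 / 2) ^ ℓ := by
        rw [one_mul, one_div_pow, one_div]
        gcongr
        · norm_num
        · omega

lemma hasSum_binDigit {y : ℝ} (hy : y ∈ Set.Ico (0 : ℝ) 1) :
    HasSum (fun ℓ : ℕ => (binDigit (ℓ + 1) y : ℝ) * 2 ^ (-((ℓ : ℤ) + 1))) y := by
  set f : ℕ → ℝ := fun n => ⌊2 ^ n * y⌋₊ / 2 ^ n
  have hterm :
      ∀ ℓ : ℕ, (binDigit (ℓ + 1) y : ℝ) * 2 ^ (-((ℓ : ℤ) + 1)) = f (ℓ + 1) - f ℓ := by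
    intro ℓ
    rw [binDigit_succ_eq, two_zpow_neg_succ]
    simp only [f]
    field_simp
    ring
  have hf0 : f 0 = 0 := by simp [f, Nat.floor_eq_zero.2 hy.2]
  have hf : Tendsto f atTop (𝓝 y) := by
    have := (tendsto_nat_floor_mul_div_atTop hy.1).comp
      (tendsto_pow_atTop_atTop_of_one_lt (one_lt_two : (1 : ℝ) < 2))
    simpa only [Function.comp_def, mul_comm y] using this
  rw [hasSum_iff_tendsto_nat_of_nonneg (fun ℓ => by positivity)]
  simpa only [hterm, Finset.sum_range_sub, hf0, sub_zero] using hf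

section Dyadic

variable (a Ω : ℕ) {h : ℝ}

lemma binDigit_dyadic_add_of_le {k : ℕ} (hk : k ≤ Ω) (h0 : 0 ≤ h) (h1 : 2 ^ Ω * h < 1) :
    binDigit k (a / 2 ^ Ω + h) = binDigit k (a / 2 ^ Ω) := by
  obtain ⟨m, rfl⟩ := Nat.exists_eq_add_of_le hk
  have hfloor : ∀ ε : ℝ, 0 ≤ ε → 2 ^ (k + m) * ε < 1 →
      ⌊2 ^ k * (a / 2 ^ (k + m) + ε)⌋₊ = a / 2 ^ m := by
    intro ε hε0 hε1
    have hrw : 2 ^ k * (a / 2 ^ (k + m) + ε) = (2 ^ (k + m) * ε + a) / ((2 ^ m : ℕ) : ℝ) := by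
      push_cast
      field_simp
      ring
    rw [hrw, Nat.floor_div_natCast, Nat.floor_add_natCast (by positivity),
      Nat.floor_eq_zero.2 hε1, zero_add]
  have h₀ := hfloor 0 le_rfl (by simp)
  rw [add_zero] at h₀
  rw [binDigit_eq_natFloor, binDigit_eq_natFloor, hfloor h h0 h1, h₀]

lemma binDigit_dyadic_add_of_lt {k : ℕ} (hk : Ω < k) (h0 : 0 ≤ h) :
    binDigit k (a / 2 ^ Ω + h) = binDigit k h := by
  obtain ⟨m, rfl⟩ : ∃ m, k = Ω + (m + 1) := ⟨k - Ω - 1, by omega⟩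
  have hrw : 2 ^ (Ω + (m + 1)) * (a / 2 ^ Ω + h)
      = 2 ^ (Ω + (m + 1)) * h + ((a * 2 ^ m * 2 : ℕ) : ℝ) := by
    push_cast
    field_simp
    ring
  rw [binDigit_eq_natFloor, binDigit_eq_natFloor, hrw, Nat.floor_add_natCast (by positivity)]
  omega

lemma xorDigit_dyadic_add (a' k : ℕ) (h0 : 0 ≤ h) (h1 : 2 ^ Ω * h < 1) :
    (binDigit k (a / 2 ^ Ω + h) + binDigit k (a' / 2 ^ Ω)) % 2
      = (binDigit k (a / 2 ^ Ω) + binDigit k (a' / 2 ^ Ω)) % 2 + binDigit k h := by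
  rcases le_or_gt k Ω with hk | hk
  · have hh : binDigit k h = 0 := by
      simpa [binDigit_zero_right] using binDigit_dyadic_add_of_le 0 Ω hk h0 h1
    rw [binDigit_dyadic_add_of_le a Ω hk h0 h1, hh, add_zero]
  · have hdyadic : ∀ b : ℕ, binDigit k (b / 2 ^ Ω) = 0 := fun b => by
      simpa [binDigit_zero_right] using binDigit_dyadic_add_of_lt b Ω hk (le_refl (0 : ℝ))
    rw [binDigit_dyadic_add_of_lt a Ω hk h0, hdyadic, hdyadic, add_zero, zero_add,
      Nat.zero_mod, zero_add, Nat.mod_eq_of_lt (binDigit_lt_two k h)]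

theorem xorBin_dyadic_add (a' : ℕ) (h0 : 0 ≤ h) (h1 : h < (2 ^ Ω)⁻¹) :
    xorBin (a / 2 ^ Ω + h) (a' / 2 ^ Ω) = xorBin (a / 2 ^ Ω) (a' / 2 ^ Ω) + h := by
  have hΩ : 2 ^ Ω * h < 1 := by
    rwa [inv_eq_one_div, lt_div_iff₀' (by positivity)] at h1
  have hh : h < 1 := (le_mul_of_one_le_left h0 (one_le_pow₀ one_le_two)).trans_lt hΩ
  have hdigits := hasSum_binDigit ⟨h0, hh⟩
  simp_rw [xorBin, xorDigit_dyadic_add a Ω _ _ h0 hΩ, Nat.cast_add, add_mul]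
  rw [(summable_digits fun ℓ => Nat.mod_lt _ two_pos).tsum_add hdigits.summable, hdigits.tsum_eq]

lemma tendsto_xorBin_dyadic_add_left (a' : ℕ) :
    Tendsto
      (fun h : ℝ => (xorBin (a / 2 ^ Ω + h) (a' / 2 ^ Ω) - xorBin (a / 2 ^ Ω) (a' / 2 ^ Ω)) / h)
      (𝓝[>] 0) (𝓝 1) := by
  refine tendsto_const_nhds.congr' (eventually_of_mem (Ioo_mem_nhdsGT (by positivity))
    fun h (hh : h ∈ Set.Ioo 0 ((2 : ℝ) ^ Ω)⁻¹) => ?_)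
  dsimp only
  rw [xorBin_dyadic_add a Ω a' hh.1.le hh.2, add_sub_cancel_left, div_self hh.1.ne']

end Dyadic

lemma xorBin_comm (x y : ℝ) : xorBin x y = xorBin y x := by
  simp_rw [xorBin, Nat.add_comm]

theorem stmt_13_general (x x' : ℝ) (Ω : ℕ)
    (hdx : ∃ a : ℕ, x = (a : ℝ) / 2 ^ Ω) (hdx' : ∃ a : ℕ, x' = (a : ℝ) / 2 ^ Ω) :
    (∀ h : ℝ, 0 < h → h < (2 : ℝ) ^ (-(Ω : ℤ)) → x + h < 1 →
      xorBin (x + h) x' = xorBin x x' + h) ∧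
    Filter.Tendsto (fun h : ℝ => (xorBin (x + h) x' - xorBin x x') / h)
      (nhdsWithin 0 (Set.Ioi 0)) (nhds 1) ∧
    Filter.Tendsto (fun h : ℝ => (xorBin x (x' + h) - xorBin x x') / h)
      (nhdsWithin 0 (Set.Ioi 0)) (nhds 1) := by
  obtain ⟨a, rfl⟩ := hdx
  obtain ⟨a', rfl⟩ := hdx'
  refine ⟨fun h h0 h1 _ => ?_, tendsto_xorBin_dyadic_add_left a Ω a', ?_⟩
  · rw [zpow_neg, zpow_natCast] at h1
    exact xorBin_dyadic_add a Ω a' h0.le h1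
  · simpa only [xorBin_comm (a / 2 ^ Ω : ℝ)] using tendsto_xorBin_dyadic_add_left a' Ω a

theorem stmt_13 (x x' : ℝ) (hx : x ∈ Set.Ico (0 : ℝ) 1) (hx' : x' ∈ Set.Ico (0 : ℝ) 1)
    (Ω : ℕ) (hdx : ∃ a : ℕ, x = (a : ℝ) / 2 ^ Ω) (hdx' : ∃ a : ℕ, x' = (a : ℝ) / 2 ^ Ω) :
    (∀ h : ℝ, 0 < h → h < (2 : ℝ) ^ (-(Ω : ℤ)) → x + h < 1 →
      xorBin (x + h) x' = xorBin x x' + h) ∧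
    Filter.Tendsto (fun h : ℝ => (xorBin (x + h) x' - xorBin x x') / h)
      (nhdsWithin 0 (Set.Ioi 0)) (nhds 1) ∧
    Filter.Tendsto (fun h : ℝ => (xorBin x (x' + h) - xorBin x x') / h)
      (nhdsWithin 0 (Set.Ioi 0)) (nhds 1) :=
  stmt_13_general x x' Ω hdx hdx'
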